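/- Suppose t, s ∈ ℝ satisfy A(t,s) > 4 r e^{s+t}. Then 4r² · (sinh φ(t,s))³ · (∂²φ/∂s∂t)(t,s) = (a cos β − r)(e^{s+t} + d₂² e^{−s−t}) + (a cos β + r)(d₁² e^{s−t} + e^{t−s}). -/

import Mathlib

open Real

noncomputable section

/-- Inverse hyperbolic cosine. -/
def arcosh (x : ℝ) : ℝ := Real.log (x + Real.sqrt (x ^ 2 - 1))

/-- `d₁ = √(a² + r² − 2ar cos β)`. -/
def d1 (a r β : ℝ) : ℝ := Real.sqrt (a ^ 2 + r ^ 2 - 2 * a * r * Real.cos β)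

/-- `d₂ = √(a² + r² + 2ar cos β)`. -/
def d2 (a r β : ℝ) : ℝ := Real.sqrt (a ^ 2 + r ^ 2 + 2 * a * r * Real.cos β)

/-- `A(t,s) = e^{2s+2t} + e^{2t} + d₁² e^{2s} + d₂²`. -/
def Afun (a r β t s : ℝ) : ℝ :=
  Real.exp (2 * s + 2 * t) + Real.exp (2 * t) + d1 a r β ^ 2 * Real.exp (2 * s) +
    d2 a r β ^ 2

/-- `φ(t,s) = arcosh(A(t,s)/(4 r e^{s+t}))`, the lifted distance function. -/
def phi (a r β t s : ℝ) : ℝ := _root_.arcosh (Afun a r β t s / (4 * r * Real.exp (s + t)))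

/-! The quotient `A / (4 r e^{s+t}) = cosh φ` is a combination
`U = c₁ e^{s+t} + c₂ e^{t-s} + c₃ e^{s-t} + c₄ e^{-s-t}`, and differentiating in `t` or `s` only
flips the signs of some coefficients. Differentiating `arcosh ∘ U` twice gives
`sinh³ φ · φ_st = U_st (U² - 1) - U U_t U_s`. Because `e^{s+t} e^{-s-t} = e^{t-s} e^{s-t} = 1`,
the combination `U U_st - U_t U_s` is the constant `4 (c₁ c₄ - c₂ c₃)`, which turns the
right-hand side into a linear combination of the four exponentials. -/

theorem sinh_arcosh_pow_three_mul_deriv_deriv {U : ℝ → ℝ → ℝ} {V : ℝ → ℝ} {t s Us Vs : ℝ}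
    (hUt : ∀ s', HasDerivAt (fun t' => U t' s') (V s') t)
    (hUs : HasDerivAt (U t) Us s) (hVs : HasDerivAt V Vs s) (h1 : 1 < U t s) :
    sinh (Real.arcosh (U t s)) ^ 3 *
        deriv (fun s' => deriv (fun t' => Real.arcosh (U t' s')) t) s =
      Vs * (U t s ^ 2 - 1) - V s * U t s * Us := by
  have hpos : 0 < U t s ^ 2 - 1 := by nlinarith
  have hinner : (fun s' => deriv (fun t' => Real.arcosh (U t' s')) t) =ᶠ[nhds s]
      fun s' => V s' / √(U t s' ^ 2 - 1) := by
    filter_upwards [hUs.continuousAt.eventually_const_lt h1] with s' hs'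
    exact ((Real.hasDerivAt_arcosh hs').comp t (hUt s')).deriv.trans (inv_mul_eq_div _ _)
  have hsqrt := ((hUs.fun_pow 2).sub_const 1).sqrt hpos.ne'
  rw [hinner.deriv_eq, (hVs.fun_div hsqrt (Real.sqrt_pos.2 hpos).ne').deriv,
    Real.sinh_arcosh h1.le]
  field_simp
  rw [Real.sq_sqrt hpos.le]
  push_cast
  ring

def expQuad (c₁ c₂ c₃ c₄ t s : ℝ) : ℝ :=
  c₁ * exp (s + t) + c₂ * exp (t - s) + c₃ * exp (s - t) + c₄ * exp (-s - t)

theorem hasDerivAt_expQuad_left (c₁ c₂ c₃ c₄ t s : ℝ) :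
    HasDerivAt (fun t' => expQuad c₁ c₂ c₃ c₄ t' s) (expQuad c₁ c₂ (-c₃) (-c₄) t s) t :=
  (((((hasDerivAt_id t).const_add s).exp.const_mul c₁).add
    (((hasDerivAt_id t).sub_const s).exp.const_mul c₂)).add
    (((hasDerivAt_id t).const_sub s).exp.const_mul c₃)).add
    (((hasDerivAt_id t).const_sub (-s)).exp.const_mul c₄)
    |>.congr_deriv (by simp only [expQuad, id]; ring)

theorem hasDerivAt_expQuad_right (c₁ c₂ c₃ c₄ t s : ℝ) :
    HasDerivAt (expQuad c₁ c₂ c₃ c₄ t) (expQuad c₁ (-c₂) c₃ (-c₄) t s) s :=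
  (((((hasDerivAt_id s).add_const t).exp.const_mul c₁).add
    (((hasDerivAt_id s).const_sub t).exp.const_mul c₂)).add
    (((hasDerivAt_id s).sub_const t).exp.const_mul c₃)).add
    (((hasDerivAt_neg s).sub_const t).exp.const_mul c₄)
    |>.congr_deriv (by simp only [expQuad, id]; ring)

theorem expQuad_eq (c₁ c₂ c₃ c₄ t s : ℝ) :
    expQuad c₁ c₂ c₃ c₄ t s = c₁ * (exp s * exp t) + c₂ * (exp t / exp s) +
      c₃ * (exp s / exp t) + c₄ / (exp s * exp t) := by
  rw [expQuad, exp_add, exp_sub, exp_sub, sub_eq_add_neg, exp_add, exp_neg, exp_neg]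
  field_simp

theorem expQuad_mul_sub_mul (c₁ c₂ c₃ c₄ t s : ℝ) :
    expQuad c₁ c₂ c₃ c₄ t s * expQuad c₁ (-c₂) (-c₃) c₄ t s -
        expQuad c₁ c₂ (-c₃) (-c₄) t s * expQuad c₁ (-c₂) c₃ (-c₄) t s =
      4 * (c₁ * c₄ - c₂ * c₃) := by
  simp only [expQuad_eq]
  field_simp
  ring

theorem d1_sq (a r β : ℝ) : d1 a r β ^ 2 = a ^ 2 + r ^ 2 - 2 * a * r * cos β :=
  Real.sq_sqrt (by nlinarith [sq_nonneg (a - r * cos β), cos_sq_le_one β, sq_nonneg r])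

theorem d2_sq (a r β : ℝ) : d2 a r β ^ 2 = a ^ 2 + r ^ 2 + 2 * a * r * cos β :=
  Real.sq_sqrt (by nlinarith [sq_nonneg (a + r * cos β), cos_sq_le_one β, sq_nonneg r])

theorem Afun_div_eq_expQuad (a r β t s : ℝ) :
    Afun a r β t s / (4 * r * exp (s + t)) =
      expQuad (4 * r)⁻¹ (4 * r)⁻¹ ((4 * r)⁻¹ * d1 a r β ^ 2) ((4 * r)⁻¹ * d2 a r β ^ 2) t s := by
  rw [expQuad_eq, Afun]
  simp only [exp_add, two_mul]
  field_simp

theorem mixed_derivative_phi_general (a r β t s : ℝ) (hr : 0 < r)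
    (h : 4 * r * Real.exp (s + t) < Afun a r β t s) :
    4 * r ^ 2 * Real.sinh (phi a r β t s) ^ 3 *
        deriv (fun s' => deriv (fun t' => phi a r β t' s') t) s =
      (a * Real.cos β - r) * (Real.exp (s + t) + d2 a r β ^ 2 * Real.exp (-s - t)) +
        (a * Real.cos β + r) * (d1 a r β ^ 2 * Real.exp (s - t) + Real.exp (t - s)) := by
  set k := (4 * r)⁻¹
  set c₃ := k * d1 a r β ^ 2
  set c₄ := k * d2 a r β ^ 2
  set U := expQuad k k c₃ c₄
  have hU (t' s' : ℝ) : Afun a r β t' s' / (4 * r * exp (s' + t')) = U t' s' :=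
    Afun_div_eq_expQuad a r β t' s'
  have h1 : 1 < U t s := by
    rw [← hU]; exact (one_lt_div (by positivity)).2 h
  have hphi (t' s' : ℝ) : phi a r β t' s' = Real.arcosh (U t' s') := by
    -- `_root_.arcosh` has the same defining formula as `Real.arcosh`
    rw [phi, hU]; rfl
  simp only [hphi]
  rw [mul_assoc, sinh_arcosh_pow_three_mul_deriv_deriv (fun s' => hasDerivAt_expQuad_left ..)
    (hasDerivAt_expQuad_right ..) (hasDerivAt_expQuad_right ..) h1, neg_neg]
  have hcross : expQuad k (-k) (-c₃) c₄ t s * (U t s ^ 2 - 1) -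
      expQuad k k (-c₃) (-c₄) t s * U t s * expQuad k (-k) c₃ (-c₄) t s =
      4 * (k * c₄ - k * c₃) * U t s - expQuad k (-k) (-c₃) c₄ t s := by
    linear_combination U t s * expQuad_mul_sub_mul k k c₃ c₄ t s
  rw [hcross]
  simp only [U, expQuad, c₃, c₄, k, d1_sq, d2_sq]
  field_simp
  ring

/-- The mixed second derivative of `φ`:
`4r² (sinh φ)³ φ''_st = (a cos β − r)(e^{s+t} + d₂²e^{−s−t}) + (a cos β + r)(d₁²e^{s−t} + e^{t−s})`. -/
theorem mixed_derivative_phi (a r β t s : ℝ) (ha : 0 ≤ a) (hr : 0 < r)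
    (hβ : β ∈ Set.Ioc 0 (π / 2))
    (h : 4 * r * Real.exp (s + t) < Afun a r β t s) :
    4 * r ^ 2 * Real.sinh (phi a r β t s) ^ 3 *
        deriv (fun s' => deriv (fun t' => phi a r β t' s') t) s =
      (a * Real.cos β - r) * (Real.exp (s + t) + d2 a r β ^ 2 * Real.exp (-s - t)) +
        (a * Real.cos β + r) * (d1 a r β ^ 2 * Real.exp (s - t) + Real.exp (t - s)) :=
  mixed_derivative_phi_general a r β t s hr h

end
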